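/- arXiv:2407.18482 — 3 statements merged into one kernel-verified Lean document; each statement's English description precedes it below -/
import Mathlib

section
/- For a convex function L : ℝⁿ → ℝ and ε > 0, the support function of the ε-subdifferential satisfies sup_{g ∈ ∂_ε L(x)} ⟨z, g⟩ = inf_{λ > 0} (L(x + λz) − L(x) + ε)/λ for every x, z ∈ ℝⁿ. -/
/-!
Any `g ∈ ∂_ε L(x)` satisfies `⟨z, g⟩ ≤ (L(x + λz) − L(x) + ε)/λ` by testing the defining
inequality at `y = x + λz`, so the supremum is at most the infimum `m`. Conversely, the ray
`λ ↦ (x + λz, L(x) − ε + mλ)`, `λ ≥ 0`, does not meet the open convex strict epigraph of `L`.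
A hyperplane separating the two cannot be vertical, because `(x, L(x) − ε)` lies on the ray
and `(x, L(x) + 1)` in the epigraph; its slope is an ε-subgradient `g` with `⟨z, g⟩ ≥ m`.
-/

open Set

section Separation

variable {E : Type*} [TopologicalSpace E] [AddCommGroup E] [Module ℝ E]

theorem exists_dual_eSubgradient_of_separation {L : E → ℝ} {φ : StrongDual ℝ E} {ε c s u : ℝ}
    {x z : E} (hε : 0 ≤ ε) (hA : ∀ y t, L y < t → φ y + t * s < u)
    (hB : ∀ l : ℝ, 0 ≤ l → u ≤ φ (x + l • z) + (L x - ε + c * l) * s) :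
    ∃ ψ : StrongDual ℝ E, (∀ y, L x + ψ (y - x) - ε ≤ L y) ∧ c ≤ ψ z := by
  have hB' (l : ℝ) (hl : 0 ≤ l) : u ≤ φ x + l * φ z + (L x - ε + c * l) * s := by
    simpa using hB l hl
  have hs : s < 0 := by
    nlinarith [(hA x (L x + 1) (lt_add_one _)).trans_le (hB' 0 le_rfl)]
  have hepi (y : E) : φ y + L y * s ≤ u := le_of_forall_pos_lt_add fun δ hδ => by
    have hδs : 0 < δ / -s := div_pos hδ (neg_pos.2 hs)
    have := hA y (L y + δ / -s) (by linarith)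
    have : (L y + δ / -s) * s = L y * s - δ := by
      rw [add_mul, div_neg, neg_mul, div_mul_cancel₀ _ hs.ne, sub_eq_add_neg]
    linarith
  refine ⟨(-s)⁻¹ • φ, fun y => ?_, ?_⟩
  · have : (-s)⁻¹ * (φ y - φ x) ≤ L y - L x + ε := by
      rw [inv_mul_le_iff₀ (neg_pos.2 hs)]
      linarith [(hepi y).trans (hB' 0 le_rfl)]
    simp only [FunLike.coe_smul, Pi.smul_apply, map_sub, smul_eq_mul]
    linarith
  · have hslope (l : ℝ) (hl : 0 ≤ l) : ε * s ≤ l * (φ z + c * s) := by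
      nlinarith [hepi x, hB' l hl]
    have : 0 ≤ φ z + c * s := by
      by_contra! h
      have := hslope (ε * s / (φ z + c * s) + 1)
        (by have := div_nonneg_of_nonpos (by nlinarith : ε * s ≤ 0) h.le; linarith)
      rw [add_one_mul, div_mul_cancel₀ _ h.ne] at this
      linarith
    simp only [FunLike.coe_smul, Pi.smul_apply, smul_eq_mul]
    rw [le_inv_mul_iff₀ (neg_pos.2 hs)]
    linarith

variable [IsTopologicalAddGroup E] [ContinuousSMul ℝ E]

theorem ConvexOn.exists_separation_strictEpigraph_ray {L : E → ℝ} (hL : ConvexOn ℝ univ L)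
    (hLc : Continuous L) {ε c : ℝ} {x z : E}
    (hc : ∀ l : ℝ, 0 ≤ l → L x - ε + c * l ≤ L (x + l • z)) :
    ∃ (φ : StrongDual ℝ E) (s u : ℝ), (∀ y t, L y < t → φ y + t * s < u) ∧
      ∀ l : ℝ, 0 ≤ l → u ≤ φ (x + l • z) + (L x - ε + c * l) * s := by
  set ray := AffineMap.lineMap (k := ℝ) (x, L x - ε) (x + z, L x - ε + c) '' Ici 0
  have hray (l : ℝ) : ((x + l • z, L x - ε + c * l) : E × ℝ) =
      AffineMap.lineMap (k := ℝ) (x, L x - ε) (x + z, L x - ε + c) l := by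
    simp [AffineMap.lineMap_apply, add_comm, mul_comm]
  have hdisj : Disjoint {p : E × ℝ | L p.1 < p.2} ray := by
    rw [disjoint_left]
    rintro _ hp ⟨l, hl, rfl⟩
    rw [← hray] at hp
    exact (hc l hl).not_gt hp
  obtain ⟨f, u, hfA, hfB⟩ := geometric_hahn_banach_open (by simpa using hL.convex_strict_epigraph)
    (isOpen_lt (hLc.comp continuous_fst) continuous_snd) ((convex_Ici 0).affine_image _) hdisj
  have hf (y : E) (t : ℝ) : f (y, t) = f.comp (.inl ℝ E ℝ) y + t * f (0, 1) := by
    have : ((y, t) : E × ℝ) = (y, 0) + t • (0, 1) := by simp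
    rw [this, map_add, map_smul, smul_eq_mul]
    rfl
  refine ⟨f.comp (.inl ℝ E ℝ), f (0, 1), u, fun y t h => hf y t ▸ hfA (y, t) h, fun l hl => ?_⟩
  rw [← hf, hray]
  exact hfB _ ⟨l, hl, rfl⟩

theorem ConvexOn.exists_dual_eSubgradient_of_ray_le {L : E → ℝ} (hL : ConvexOn ℝ univ L)
    (hLc : Continuous L) {ε c : ℝ} {x z : E}
    (hc : ∀ l : ℝ, 0 ≤ l → L x - ε + c * l ≤ L (x + l • z)) :
    ∃ φ : StrongDual ℝ E, (∀ y, L x + φ (y - x) - ε ≤ L y) ∧ c ≤ φ z := by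
  obtain ⟨φ, s, u, hA, hB⟩ := hL.exists_separation_strictEpigraph_ray hLc hc
  exact exists_dual_eSubgradient_of_separation (by simpa using hc 0 le_rfl) hA hB

end Separation

section InnerProductSpace

variable {F : Type*} [NormedAddCommGroup F] [InnerProductSpace ℝ F]

def eSubdiff (L : F → ℝ) (ε : ℝ) (x : F) : Set F :=
  {g | ∀ y, L x + inner ℝ g (y - x) - ε ≤ L y}

theorem inner_le_div_of_mem_eSubdiff {L : F → ℝ} {ε : ℝ} {x g : F} (hg : g ∈ eSubdiff L ε x)
    (z : F) {l : ℝ} (hl : 0 < l) : inner ℝ z g ≤ (L (x + l • z) - L x + ε) / l := by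
  have := hg (x + l • z)
  rw [add_sub_cancel_left, real_inner_smul_right, real_inner_comm] at this
  rw [le_div_iff₀ hl]
  linarith

theorem ConvexOn.exists_mem_eSubdiff_of_ray_le [CompleteSpace F] {L : F → ℝ}
    (hL : ConvexOn ℝ univ L) (hLc : Continuous L) {ε c : ℝ} {x z : F}
    (hc : ∀ l : ℝ, 0 ≤ l → L x - ε + c * l ≤ L (x + l • z)) :
    ∃ g ∈ eSubdiff L ε x, c ≤ inner ℝ z g := by
  obtain ⟨φ, hφ, hφz⟩ := hL.exists_dual_eSubgradient_of_ray_le hLc hc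
  refine ⟨(InnerProductSpace.toDual ℝ F).symm φ, fun y => ?_, ?_⟩
  · simpa only [InnerProductSpace.toDual_symm_apply] using hφ y
  · rwa [real_inner_comm, InnerProductSpace.toDual_symm_apply]

end InnerProductSpace

theorem eSubdiff_support_fn_identity {n : ℕ}
    (L : EuclideanSpace ℝ (Fin n) → ℝ) (hL : ConvexOn ℝ Set.univ L)
    (ε : ℝ) (hε : 0 < ε) (x z : EuclideanSpace ℝ (Fin n)) :
    sSup ((fun g : EuclideanSpace ℝ (Fin n) => (inner ℝ z g : ℝ)) ''
        {g : EuclideanSpace ℝ (Fin n) | ∀ y, L x + inner ℝ g (y - x) - ε ≤ L y}) =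
      sInf {v : ℝ | ∃ l : ℝ, 0 < l ∧ v = (L (x + l • z) - L x + ε) / l} := by
  set T := {v : ℝ | ∃ l : ℝ, 0 < l ∧ v = (L (x + l • z) - L x + ε) / l}
  have hLc : Continuous L := hL.locallyLipschitz.continuous
  have hinner_le (g) (hg : g ∈ eSubdiff L ε x) : ∀ v ∈ T, inner ℝ z g ≤ v := by
    rintro _ ⟨l, hl, rfl⟩
    exact inner_le_div_of_mem_eSubdiff hg z hl
  -- the ray in direction `0` shows that `∂_ε L(x)` is nonempty
  obtain ⟨g₀, hg₀, -⟩ := hL.exists_mem_eSubdiff_of_ray_le hLc (x := x) (z := 0) (c := 0)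
    fun l _ => by simpa using hε.le
  have hT : BddBelow T := ⟨_, hinner_le g₀ hg₀⟩
  have hupper (g) (hg : g ∈ eSubdiff L ε x) : inner ℝ z g ≤ sInf T :=
    le_csInf ⟨_, 1, one_pos, rfl⟩ (hinner_le g hg)
  obtain ⟨g, hg, hgz⟩ := hL.exists_mem_eSubdiff_of_ray_le hLc (c := sInf T) fun l hl => by
    rcases hl.eq_or_lt with rfl | hl
    · simpa using hε.le
    · have := csInf_le hT ⟨l, hl, rfl⟩
      rw [le_div_iff₀ hl] at this
      linarith
  refine IsGreatest.csSup_eq ⟨⟨g, hg, le_antisymm (hupper g hg) hgz⟩, ?_⟩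
  rintro _ ⟨g', hg', rfl⟩
  exact hupper g' hg'
end

section
/- (Subgradient method approximate convergence) Let L : ℝⁿ → ℝ be convex with minimizer x*, and suppose the iterates x^{(k+1)} = x^{(k)} − λ_k g^{(k)} with g^{(k)} ∈ ∂L(x^{(k)}) and ‖g^{(k)}‖ ≤ G. Then for every k, min_{i ≤ k} L(x^{(i)}) − L(x*) ≤ (‖x^{(1)} − x*‖² + G² Σ_{i=1}^{k} λ_i²)/(2 Σ_{i=1}^{k} λ_i). -/
/-!
Expanding the square in the update `x (i+1) = x i - λ i • g i` and using the subgradient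
inequality at the comparison point gives the one-step estimate
`‖x (i+1) - x⋆‖² ≤ ‖x i - x⋆‖² - 2 λ i (L (x i) - L x⋆) + λ i² G²`.
Telescoping and dropping the final `‖x (k+1) - x⋆‖² ≥ 0` bounds the weighted gap
`2 ∑ λ i (L (x i) - L x⋆)`, and the smallest gap is at most the `λ`-weighted average of the gaps.
-/

open Finset RealInnerProductSpace

theorem Finset.sum_mul_inf'_sub_le {ι : Type*} {s : Finset ι} (hs : s.Nonempty) {w f : ι → ℝ}
    (hw : ∀ i ∈ s, 0 ≤ w i) (c : ℝ) :
    (∑ i ∈ s, w i) * (s.inf' hs f - c) ≤ ∑ i ∈ s, w i * (f i - c) := by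
  rw [sum_mul]
  exact sum_le_sum fun i hi => mul_le_mul_of_nonneg_left (by linarith [inf'_le f hi]) (hw i hi)

theorem le_add_sum_range_of_le_add {d a : ℕ → ℝ} (h : ∀ i, d (i + 1) ≤ d i + a i) (m : ℕ) :
    d m ≤ d 0 + ∑ i ∈ range m, a i := by
  induction m with
  | zero => simp
  | succ m ih => rw [sum_range_succ]; linarith [h m]

section SubgradientMethod

variable {E : Type*} [NormedAddCommGroup E] [InnerProductSpace ℝ E]

theorem norm_sub_sq_le_of_subgradient_step {f : E → ℝ} {x g y : E} {t : ℝ} (ht : 0 ≤ t)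
    (hg : f x + ⟪g, y - x⟫ ≤ f y) :
    ‖x - t • g - y‖ ^ 2 ≤ ‖x - y‖ ^ 2 - 2 * t * (f x - f y) + t ^ 2 * ‖g‖ ^ 2 := by
  have hexpand : ‖x - t • g - y‖ ^ 2 = ‖x - y‖ ^ 2 - 2 * t * ⟪g, x - y⟫ + t ^ 2 * ‖g‖ ^ 2 := by
    rw [sub_right_comm, norm_sub_sq_real, real_inner_smul_right, real_inner_comm, norm_smul,
      mul_pow, Real.norm_eq_abs, sq_abs]
    ring
  have hgap : f x - f y ≤ ⟪g, x - y⟫ := by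
    rw [← neg_sub y x, inner_neg_right]
    linarith
  rw [hexpand]
  linarith [mul_le_mul_of_nonneg_left hgap ht]

theorem subgradient_method_weighted_gap_le {f : E → ℝ} {x g : ℕ → E} {t : ℕ → ℝ} {y : E}
    (ht : ∀ i, 0 ≤ t i) (hx : ∀ i, x (i + 1) = x i - t i • g i)
    (hg : ∀ i, f (x i) + ⟪g i, y - x i⟫ ≤ f y) (m : ℕ) :
    2 * ∑ i ∈ range m, t i * (f (x i) - f y) ≤
      ‖x 0 - y‖ ^ 2 + ∑ i ∈ range m, t i ^ 2 * ‖g i‖ ^ 2 := by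
  have htelescope := le_add_sum_range_of_le_add
    (d := fun i => ‖x i - y‖ ^ 2)
    (a := fun i => t i ^ 2 * ‖g i‖ ^ 2 - 2 * (t i * (f (x i) - f y)))
    (fun i => by
      rw [hx]
      linarith [norm_sub_sq_le_of_subgradient_step (ht i) (hg i)]) m
  rw [sum_sub_distrib, ← mul_sum] at htelescope
  linarith [sq_nonneg ‖x m - y‖]

end SubgradientMethod

theorem subgradient_method_bound_general {n : ℕ}
    (L : EuclideanSpace ℝ (Fin n) → ℝ)
    (xstar : EuclideanSpace ℝ (Fin n))
    (x g : ℕ → EuclideanSpace ℝ (Fin n)) (lam : ℕ → ℝ) (G : ℝ)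
    (hlam : ∀ i, 0 < lam i)
    (hiter : ∀ i, x (i + 1) = x i - lam i • g i)
    (hsub : ∀ i, ∀ y, L (x i) + inner ℝ (g i) (y - x i) ≤ L y)
    (hG : ∀ i, ‖g i‖ ≤ G) (k : ℕ) :
    (Finset.range (k + 1)).inf' Finset.nonempty_range_add_one (fun i => L (x i)) - L xstar ≤
      (‖x 0 - xstar‖ ^ 2 + G ^ 2 * ∑ i ∈ Finset.range (k + 1), lam i ^ 2) /
        (2 * ∑ i ∈ Finset.range (k + 1), lam i) := by
  have hlam0 : ∀ i, 0 ≤ lam i := fun i => (hlam i).le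
  have hsum : 0 < ∑ i ∈ range (k + 1), lam i := sum_pos (fun i _ => hlam i) nonempty_range_add_one
  have hgap := subgradient_method_weighted_gap_le hlam0 hiter (fun i => hsub i xstar) (k + 1)
  have hgrad : ∑ i ∈ range (k + 1), lam i ^ 2 * ‖g i‖ ^ 2 ≤
      G ^ 2 * ∑ i ∈ range (k + 1), lam i ^ 2 := by
    rw [mul_sum]
    refine sum_le_sum fun i _ => ?_
    rw [mul_comm (G ^ 2)]
    exact mul_le_mul_of_nonneg_left (pow_le_pow_left₀ (norm_nonneg _) (hG i) 2) (sq_nonneg _)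
  have hinf := sum_mul_inf'_sub_le (s := range (k + 1)) (f := fun i => L (x i))
    nonempty_range_add_one (fun i _ => hlam0 i) (L xstar)
  rw [le_div_iff₀ (by positivity)]
  linarith

theorem subgradient_method_bound {n : ℕ}
    (L : EuclideanSpace ℝ (Fin n) → ℝ) (hL : ConvexOn ℝ Set.univ L)
    (xstar : EuclideanSpace ℝ (Fin n)) (hmin : ∀ y, L xstar ≤ L y)
    (x g : ℕ → EuclideanSpace ℝ (Fin n)) (lam : ℕ → ℝ) (G : ℝ)
    (hlam : ∀ i, 0 < lam i)
    (hiter : ∀ i, x (i + 1) = x i - lam i • g i)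
    (hsub : ∀ i, ∀ y, L (x i) + inner ℝ (g i) (y - x i) ≤ L y)
    (hG : ∀ i, ‖g i‖ ≤ G) (k : ℕ) :
    (Finset.range (k + 1)).inf' Finset.nonempty_range_add_one (fun i => L (x i)) - L xstar ≤
      (‖x 0 - xstar‖ ^ 2 + G ^ 2 * ∑ i ∈ Finset.range (k + 1), lam i ^ 2) /
        (2 * ∑ i ∈ Finset.range (k + 1), lam i) :=
  subgradient_method_bound_general L xstar x g lam G hlam hiter hsub hG k
end

section
/- (Subgradient method with diminishing steps converges in value) Under the setting of the subgradient method with bounded subgradients ‖g^{(i)}‖ ≤ G, if Σ λ_i = ∞ and Σ λ_i² < ∞, then min_{i ≤ k} L(x^{(i)}) → inf L as k → ∞. -/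
/-!
With `Dᵢ = ‖xᵢ - x*‖²`, the subgradient inequality gives the one-step estimate
`Dᵢ₊₁ ≤ Dᵢ - 2 λᵢ (L xᵢ - L x*) + λᵢ² G²`. Telescoping shows that the weighted gaps
`λᵢ (L xᵢ - L x*)` have a finite sum, and since `Σ λᵢ = ∞`, the running minimum of the gaps,
which is at most their `λ`-weighted average, tends to `0`.
-/

open Filter Finset Topology

theorem norm_sub_smul_sub_sq_le_of_subgradient {E : Type*} [NormedAddCommGroup E]
    [InnerProductSpace ℝ E] {L : E → ℝ} {x g y : E} {lam G : ℝ} (hlam : 0 ≤ lam)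
    (hsub : L x + inner ℝ g (y - x) ≤ L y) (hG : ‖g‖ ≤ G) :
    ‖x - lam • g - y‖ ^ 2 ≤ ‖x - y‖ ^ 2 - 2 * (lam * (L x - L y)) + lam ^ 2 * G ^ 2 := by
  have hexpand : ‖x - lam • g - y‖ ^ 2 =
      ‖x - y‖ ^ 2 - 2 * (lam * inner ℝ g (x - y)) + lam ^ 2 * ‖g‖ ^ 2 := by
    rw [sub_right_comm, norm_sub_sq_real, real_inner_smul_right, norm_smul, mul_pow,
      Real.norm_eq_abs, sq_abs, real_inner_comm]
  have hgap : L x - L y ≤ inner ℝ g (x - y) := by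
    rw [← neg_sub y x, inner_neg_right]
    linarith
  have hgG : ‖g‖ ^ 2 ≤ G ^ 2 := pow_le_pow_left₀ (norm_nonneg g) hG 2
  rw [hexpand]
  gcongr

theorem summable_of_le_sub_add {D a b : ℕ → ℝ} (hD : ∀ i, 0 ≤ D i) (ha : ∀ i, 0 ≤ a i)
    (hb : Summable b) (hstep : ∀ i, D (i + 1) ≤ D i - a i + b i) : Summable a := by
  have htele : ∀ k, D k + ∑ i ∈ range k, a i ≤ D 0 + ∑ i ∈ range k, b i := by
    intro k
    induction k with
    | zero => simp
    | succ k ih =>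
      rw [sum_range_succ, sum_range_succ]
      linarith [hstep k]
  refine summable_of_sum_range_le ha (c := D 0 + ∑' i, |b i|) fun k => ?_
  have hpartial : ∑ i ∈ range k, b i ≤ ∑' i, |b i| :=
    (sum_le_sum fun i _ => le_abs_self (b i)).trans
      (hb.abs.sum_le_tsum _ fun i _ => abs_nonneg (b i))
  linarith [htele k, hD k]

theorem Finset.inf'_sub_mul_sum_le {ι : Type*} {s : Finset ι} (hs : s.Nonempty) {f w : ι → ℝ}
    (c : ℝ) (hw : ∀ i ∈ s, 0 ≤ w i) :
    (s.inf' hs f - c) * ∑ i ∈ s, w i ≤ ∑ i ∈ s, w i * (f i - c) := by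
  rw [mul_sum]
  refine sum_le_sum fun i hi => ?_
  rw [mul_comm (w i)]
  exact mul_le_mul_of_nonneg_right (by linarith [inf'_le f hi]) (hw i hi)

theorem tendsto_inf'_range_of_summable_mul_sub {f lam : ℕ → ℝ} {c : ℝ} (hlam : ∀ i, 0 ≤ lam i)
    (hdiv : ¬ Summable lam) (hf : ∀ i, c ≤ f i) (hsum : Summable fun i => lam i * (f i - c)) :
    Tendsto (fun k => (range (k + 1)).inf' nonempty_range_add_one f) atTop (𝓝 c) := by
  set A : ℕ → ℝ := fun k => ∑ i ∈ range (k + 1), lam i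
  have hA : Tendsto A atTop atTop :=
    ((not_summable_iff_tendsto_nat_atTop_of_nonneg hlam).mp hdiv).comp (tendsto_add_atTop_nat 1)
  have hupper : ∀ᶠ k in atTop,
      (range (k + 1)).inf' nonempty_range_add_one f ≤ c + (∑' i, lam i * (f i - c)) / A k := by
    filter_upwards [hA.eventually_gt_atTop 0] with k hAk
    have hweighted := (inf'_sub_mul_sum_le nonempty_range_add_one c fun i _ => hlam i).trans
      (hsum.sum_le_tsum (range (k + 1)) fun i _ => mul_nonneg (hlam i) (sub_nonneg.2 (hf i)))
    linarith [(le_div_iff₀ hAk).mpr hweighted]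
  have hbound : Tendsto (fun k => c + (∑' i, lam i * (f i - c)) / A k) atTop (𝓝 c) := by
    simpa using tendsto_const_nhds.add (tendsto_const_nhds.div_atTop hA)
  exact tendsto_of_tendsto_of_tendsto_of_le_of_le' tendsto_const_nhds hbound
    (Eventually.of_forall fun k => le_inf' _ _ fun i _ => hf i) hupper

theorem subgradient_method_converges_general {n : ℕ}
    (L : EuclideanSpace ℝ (Fin n) → ℝ)
    (xstar : EuclideanSpace ℝ (Fin n)) (hmin : ∀ y, L xstar ≤ L y)
    (x g : ℕ → EuclideanSpace ℝ (Fin n)) (lam : ℕ → ℝ) (G : ℝ)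
    (hlam : ∀ i, 0 < lam i)
    (hiter : ∀ i, x (i + 1) = x i - lam i • g i)
    (hsub : ∀ i, ∀ y, L (x i) + inner ℝ (g i) (y - x i) ≤ L y)
    (hG : ∀ i, ‖g i‖ ≤ G)
    (hdiv : ¬ Summable lam) (hsq : Summable (fun i => lam i ^ 2)) :
    Filter.Tendsto
      (fun k => (Finset.range (k + 1)).inf' Finset.nonempty_range_add_one (fun i => L (x i)))
      Filter.atTop (nhds (⨅ z, L z)) := by
  rw [ciInf_eq_of_forall_ge_of_forall_gt_exists_lt hmin fun _ hw => ⟨xstar, hw⟩]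
  have hgap : ∀ i, 0 ≤ lam i * (L (x i) - L xstar) :=
    fun i => mul_nonneg (hlam i).le (sub_nonneg.2 (hmin _))
  have hweighted : Summable fun i => 2 * (lam i * (L (x i) - L xstar)) :=
    summable_of_le_sub_add (D := fun i => ‖x i - xstar‖ ^ 2) (fun _ => sq_nonneg _)
      (fun i => mul_nonneg zero_le_two (hgap i)) (hsq.mul_right (G ^ 2)) fun i => by
        rw [hiter i]
        exact norm_sub_smul_sub_sq_le_of_subgradient (hlam i).le (hsub i xstar) (hG i)
  exact tendsto_inf'_range_of_summable_mul_sub (fun i => (hlam i).le) hdiv (fun i => hmin _)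
    ((summable_mul_left_iff two_ne_zero).mp hweighted)

theorem subgradient_method_converges {n : ℕ}
    (L : EuclideanSpace ℝ (Fin n) → ℝ) (hL : ConvexOn ℝ Set.univ L)
    (xstar : EuclideanSpace ℝ (Fin n)) (hmin : ∀ y, L xstar ≤ L y)
    (x g : ℕ → EuclideanSpace ℝ (Fin n)) (lam : ℕ → ℝ) (G : ℝ)
    (hlam : ∀ i, 0 < lam i)
    (hiter : ∀ i, x (i + 1) = x i - lam i • g i)
    (hsub : ∀ i, ∀ y, L (x i) + inner ℝ (g i) (y - x i) ≤ L y)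
    (hG : ∀ i, ‖g i‖ ≤ G)
    (hdiv : ¬ Summable lam) (hsq : Summable (fun i => lam i ^ 2)) :
    Filter.Tendsto
      (fun k => (Finset.range (k + 1)).inf' Finset.nonempty_range_add_one (fun i => L (x i)))
      Filter.atTop (nhds (⨅ z, L z)) :=
  subgradient_method_converges_general L xstar hmin x g lam G hlam hiter hsub hG hdiv hsq
end
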